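/- Ben-David generalization bound: with 0-1 loss, for any hypothesis class H of measurable functions X → Y and any h ∈ H, ε^t(h) ≤ ε^s(h) + d_{HΔH} + λ_H, where d_{HΔH} = sup_{h',h''∈H} |ε^s(h',h'') − ε^t(h',h'')| is the HΔH-discrepancy between the source and target X-marginals, and λ_H = inf_{h'∈H} (ε^s(h') + ε^t(h')) is the ideal joint risk. -/

import Mathlib

open MeasureTheory

noncomputable def risk {X Y : Type*} [MeasurableSpace X] [MeasurableSpace Y]
    (D : Measure (X × Y)) (h : X → Y) : ℝ :=
  (D {z | h z.1 ≠ z.2}).toReal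

noncomputable def disag {X Y : Type*} [MeasurableSpace X] [MeasurableSpace Y]
    (D : Measure (X × Y)) (h h' : X → Y) : ℝ :=
  (D.fst {x | h x ≠ h' x}).toReal

/-! Fix a competitor `g ∈ H`. In the target, `ε^t(h) ≤ ε^t(g) + ε^t(h,g)`; moving the disagreement
to the source costs at most `|ε^s(h,g) - ε^t(h,g)| ≤ d_{HΔH}`, and `ε^s(h,g) ≤ ε^s(h) + ε^s(g)`.
Hence `ε^t(h) - ε^s(h) - d_{HΔH} ≤ ε^s(g) + ε^t(g)` for every `g ∈ H`, which bounds `λ_H` from below. -/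

section

variable {X Y : Type*} [MeasurableSpace X] [MeasurableSpace Y]

lemma risk_le_risk_add_disag (D : Measure (X × Y)) [IsFiniteMeasure D] (h h' : X → Y) :
    risk D h ≤ risk D h' + disag D h h' := by
  have hcover : {z : X × Y | h z.1 ≠ z.2} ⊆
      {z | h' z.1 ≠ z.2} ∪ Prod.fst ⁻¹' {x | h x ≠ h' x} := by
    rintro ⟨x, y⟩ hxy
    by_cases h'xy : h' x = y
    · exact Or.inr fun hx => hxy (hx.trans h'xy)
    · exact Or.inl h'xy
  calc risk D h ≤ D.real ({z | h' z.1 ≠ z.2} ∪ Prod.fst ⁻¹' {x | h x ≠ h' x}) :=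
        measureReal_mono hcover
    _ ≤ risk D h' + D.real (Prod.fst ⁻¹' {x | h x ≠ h' x}) := measureReal_union_le _ _
    _ ≤ risk D h' + disag D h h' := by
        gcongr
        exact ENNReal.toReal_mono (measure_ne_top _ _)
          (Measure.le_map_apply measurable_fst.aemeasurable _)

lemma disag_le_risk_add_risk (D : Measure (X × Y)) [IsFiniteMeasure D] {h : X → Y}
    (hh : Measurable h) (h' : X → Y) : disag D h h' ≤ risk D h + risk D h' := by
  -- `{h ≠ h'}` need not be measurable: enlarge it to the measurable set of those `x` whose
  -- point `(x, h x)` lies in a measurable hull of `{h' x ≠ y}`.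
  set A' := toMeasurable D {z : X × Y | h' z.1 ≠ z.2}
  set T : Set X := (fun x => (x, h x)) ⁻¹' A'
  have hT : MeasurableSet T := (measurable_id.prodMk hh) (measurableSet_toMeasurable _ _)
  have hsub : {x | h x ≠ h' x} ⊆ T := fun x hx => subset_toMeasurable D _ (Ne.symm hx)
  have hcover : Prod.fst ⁻¹' T ⊆ {z : X × Y | h z.1 ≠ z.2} ∪ A' := by
    rintro ⟨x, y⟩ hx
    by_cases hy : h x = y
    · exact Or.inr (hy ▸ hx)
    · exact Or.inl hy
  calc disag D h h' ≤ D.fst.real T := measureReal_mono hsub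
    _ = D.real (Prod.fst ⁻¹' T) := by rw [measureReal_def, Measure.fst_apply hT]; rfl
    _ ≤ D.real ({z | h z.1 ≠ z.2} ∪ A') := measureReal_mono hcover
    _ ≤ risk D h + D.real A' := measureReal_union_le _ _
    _ = risk D h + risk D h' := by rw [measureReal_def, measure_toMeasurable]; rfl

lemma abs_disag_sub_disag_le_one (p q : Measure (X × Y)) [IsProbabilityMeasure p]
    [IsProbabilityMeasure q] (h h' : X → Y) : |disag p h h' - disag q h h'| ≤ 1 :=
  abs_sub_le_of_nonneg_of_le measureReal_nonneg measureReal_le_one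
    measureReal_nonneg measureReal_le_one

lemma risk_le_risk_add_abs_disag_sub_add_risk_add_risk (p q : Measure (X × Y))
    [IsFiniteMeasure p] [IsFiniteMeasure q] {h : X → Y} (hh : Measurable h) (g : X → Y) :
    risk q h ≤ risk p h + |disag p h g - disag q h g| + (risk p g + risk q g) := by
  linarith [risk_le_risk_add_disag q h g, disag_le_risk_add_risk p hh g,
    neg_abs_le (disag p h g - disag q h g)]

end

theorem ben_david_bound_general
    {X Y : Type*} [MeasurableSpace X] [MeasurableSpace Y]
    (p q : Measure (X × Y)) [IsProbabilityMeasure p] [IsProbabilityMeasure q]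
    (H : Set (X → Y)) (hmeas : ∀ h ∈ H, Measurable h)
    (h : X → Y) (hh : h ∈ H) :
    risk q h ≤ risk p h
      + sSup ((fun hp : (X → Y) × (X → Y) => |disag p hp.1 hp.2 - disag q hp.1 hp.2|) '' (H ×ˢ H))
      + sInf ((fun h' => risk p h' + risk q h') '' H) := by
  set discrepancy := (fun hp : (X → Y) × (X → Y) => |disag p hp.1 hp.2 - disag q hp.1 hp.2|) ''
    (H ×ˢ H)
  have hbdd : BddAbove discrepancy := by
    refine ⟨1, ?_⟩
    rintro _ ⟨⟨h₁, h₂⟩, -, rfl⟩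
    exact abs_disag_sub_disag_le_one p q h₁ h₂
  have hjoint : risk q h - risk p h - sSup discrepancy ≤
      sInf ((fun h' => risk p h' + risk q h') '' H) := by
    refine le_csInf (Set.Nonempty.image _ ⟨h, hh⟩) ?_
    rintro _ ⟨g, hg, rfl⟩
    have hdisc : |disag p h g - disag q h g| ≤ sSup discrepancy :=
      le_csSup hbdd ⟨(h, g), ⟨hh, hg⟩, rfl⟩
    linarith [risk_le_risk_add_abs_disag_sub_add_risk_add_risk p q (hmeas h hh) g]
  linarith

/-- Ben-David generalization bound:
`ε^t(h) ≤ ε^s(h) + d_{HΔH} + λ_H`. -/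
theorem ben_david_bound
    {X Y : Type*} [MeasurableSpace X] [MeasurableSpace Y] [MeasurableSingletonClass Y]
    (p q : Measure (X × Y)) [IsProbabilityMeasure p] [IsProbabilityMeasure q]
    (H : Set (X → Y)) (hne : H.Nonempty) (hmeas : ∀ h ∈ H, Measurable h)
    (h : X → Y) (hh : h ∈ H) :
    risk q h ≤ risk p h
      + sSup ((fun hp : (X → Y) × (X → Y) => |disag p hp.1 hp.2 - disag q hp.1 hp.2|) '' (H ×ˢ H))
      + sInf ((fun h' => risk p h' + risk q h') '' H) :=
  ben_david_bound_general p q H hmeas h hh
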